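/- Uniqueness of reduced rational forms of formal characters (Lemma 3.7 / Lemma 3.8): Let T and T′ be finite subsets of ℕ^N∖{0} such that the binomials b_d = 1 − X^d, for d ranging over T ∪ T′, are pairwise coprime and squarefree in ℤ[x₁,…,x_N]. Let μ₁,…,μ_m ∈ V lie in pairwise distinct cosets of Q, and likewise ν₁,…,ν_{m′}; let f₁,…,f_m and g₁,…,g_{m′} ∈ ℤ[x₁,…,x_N] have nonzero constant term; let n : T → ℕ and n′ : T′ → ℕ take only positive values; assume that for every d ∈ T there is some i with b_d ∤ f_i, and for every d ∈ T′ there is some j with b_d ∤ g_j. If, in 𝒳, (∑_{i=1}^m e^{μ_i}·f_i) · ∏_{d∈T′} b_d^{n′(d)} = (∑_{j=1}^{m′} e^{ν_j}·g_j) · ∏_{d∈T} b_d^{n(d)}, then T = T′, n = n′, m = m′, and there is a bijection σ of the index sets with ν_j = μ_{σ(j)} and g_j = f_{σ(j)} for all j. -/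

import Mathlib

/-!
Sending `xᵢ ↦ e^{-αᵢ}` identifies polynomials with elements of the group ring `ℤ[V]` supported
in the pointed cone `-ℕα ⊆ Q`, and on finitely supported functions the convolution of the
character ring is the group-ring product. Both sides of the identity then become sums of
translates `e^μ · F` with `F` supported in the cone and `F(0) ≠ 0`. As the shifts lie in distinct
cosets of `Q`, restricting to one coset isolates a single translate on each side, and since the
cone is pointed a translate `e^μ · F` determines both `μ` and `F`. This matches the summands
bijectively with `f_{σ j} · ∏_{T'} b_d^{n' d} = g_j · ∏_T b_d^{n d}`. If some `b_d` occurred to a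
higher power on the right, cancelling the common power and using coprimality would make `b_d`
divide every `f_i`, against reducedness; symmetrically on the left.
-/

open Function MvPolynomial

noncomputable section

variable {V : Type*} [AddCommGroup V] [Module ℝ V]

/-- The positive cone `Q⁺` generated by the simple roots `α`. -/
def Qplus {N : ℕ} (α : Fin N → V) : Set V :=
  {v | ∃ n : Fin N → ℕ, v = ∑ i, n i • α i}

/-- The root lattice `Q` generated by the simple roots `α`. -/
def Qlat {N : ℕ} (α : Fin N → V) : Set V :=
  {v | ∃ n : Fin N → ℤ, v = ∑ i, n i • α i}

/-- A subset of `V` is lower-finite if it is contained in a finite union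
of sets of the form `ν - Q⁺` with `ν ∈ V`. -/
def LowerFinite {N : ℕ} (α : Fin N → V) (A : Set V) : Prop :=
  ∃ s : Finset V, A ⊆ ⋃ ν ∈ s, {x | ∃ q ∈ Qplus α, x = ν - q}

/-- `e μ` : the indicator function of `μ`, i.e. the element `e^μ` of the character ring. -/
def e (μ : V) : V → ℤ := Set.indicator {μ} 1

/-- Convolution product on the character ring: `(f·g)(λ) = ∑_{μ+η=λ} f(μ)g(η)`. -/
def conv (f g : V → ℤ) : V → ℤ := fun l => ∑ᶠ μ, f μ * g (l - μ)

open scoped Classical in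
/-- The map `ℤ[x₁,…,x_N] → 𝒳` determined by sending `xᵢ` to `e^{-αᵢ}`. -/
def polyToChar {N : ℕ} (α : Fin N → V) (p : MvPolynomial (Fin N) ℤ) : V → ℤ :=
  fun v => ∑ᶠ d : Fin N →₀ ℕ, if v = -(∑ i, d i • α i) then coeff d p else 0

/-- The binomial `b_d = 1 - X^d` in `ℤ[x₁,…,x_N]`. -/
def bd {N : ℕ} (d : Fin N → ℕ) : MvPolynomial (Fin N) ℤ :=
  1 - ∏ i, X i ^ d i

section CharacterAlgebra

open AddMonoidAlgebra

variable {ι M : Type*} [Fintype ι] [AddCommGroup M]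

def weight (α : ι → M) : (ι →₀ ℕ) →+ M where
  toFun d := -∑ i, d i • α i
  map_zero' := by simp
  map_add' a b := by simp only [Finsupp.add_apply, add_smul, Finset.sum_add_distrib]; abel

theorem weight_injective {α : ι → M} (hα : LinearIndependent ℕ α) : Injective (weight α) := by
  intro a b hab
  ext i
  exact Fintype.linearIndependent_iffₛ.mp hα a b (neg_injective hab) i

theorem eq_zero_of_mem_range_weight_of_neg_mem {α : ι → M} (hα : Injective (weight α)) {x : M}
    (hx : x ∈ Set.range (weight α)) (hnx : -x ∈ Set.range (weight α)) : x = 0 := by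
  obtain ⟨a, rfl⟩ := hx
  obtain ⟨b, hb⟩ := hnx
  have hab : a + b = 0 := hα (by rw [map_add, hb, add_neg_cancel, map_zero])
  rw [(add_eq_zero.mp hab).1, map_zero]

theorem range_weight_subset_span (α : ι → M) :
    Set.range (weight α) ⊆ Submodule.span ℤ (Set.range α) := by
  rintro _ ⟨d, rfl⟩
  exact neg_mem (Submodule.sum_mem _ fun i _ =>
    Submodule.smul_of_tower_mem _ (d i) (Submodule.subset_span ⟨i, rfl⟩))

variable {R : Type*} [CommSemiring R]

def charHom (α : ι → M) : MvPolynomial ι R →+* AddMonoidAlgebra R M :=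
  mapDomainRingHom R (weight α)

theorem coeff_charHom (α : ι → M) (p : MvPolynomial ι R) :
    (charHom α p).coeff = Finsupp.mapDomain (weight α) (AddMonoidAlgebra.coeff p) := rfl

theorem charHom_injective {α : ι → M} (hα : Injective (weight α)) :
    Injective (charHom (R := R) α) :=
  mapDomain_injective hα

theorem coeff_charHom_zero {α : ι → M} (hα : Injective (weight α)) (p : MvPolynomial ι R) :
    (charHom α p).coeff 0 = MvPolynomial.coeff 0 p := by
  rw [coeff_charHom, ← map_zero (weight α), Finsupp.mapDomain_apply hα]
  rfl

theorem coeff_charHom_mul_zero {α : ι → M} (hα : Injective (weight α)) (p : MvPolynomial ι R)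
    {q : MvPolynomial ι R} (hq : constantCoeff q = 1) :
    (charHom α (p * q)).coeff 0 = MvPolynomial.coeff 0 p := by
  rw [coeff_charHom_zero hα, ← constantCoeff_eq, map_mul, hq, mul_one, constantCoeff_eq]

theorem support_coeff_charHom_subset (α : ι → M) (p : MvPolynomial ι R) :
    ↑(charHom α p).coeff.support ⊆ Set.range (weight α) := by
  classical
  rw [coeff_charHom]
  intro v hv
  obtain ⟨d, -, rfl⟩ := Finset.mem_image.mp (Finsupp.mapDomain_support hv)
  exact Set.mem_range_self d

end CharacterAlgebra

section CharacterRing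

open AddMonoidAlgebra

theorem e_eq_coeff_single {G : Type*} (μ : G) : e μ = ⇑(single μ (1 : ℤ)).coeff :=
  Finsupp.set_indicator_singleton μ 1

variable {G : Type*} [AddCommGroup G]

theorem conv_coeff (x y : AddMonoidAlgebra ℤ G) : conv ⇑x.coeff ⇑y.coeff = ⇑(x * y).coeff := by
  funext l
  rw [conv, coeff_mul_apply_left, Finsupp.sum]
  simp only [neg_add_eq_sub]
  exact finsum_eq_sum_of_support_subset _ fun v hv => by
    simpa using left_ne_zero_of_mul hv

theorem polyToChar_eq_coeff_charHom {N : ℕ} (α : Fin N → G) (p : MvPolynomial (Fin N) ℤ) :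
    polyToChar α p = ⇑(charHom α p).coeff := by
  classical
  funext v
  rw [polyToChar, finsum_eq_sum_of_support_subset _ (s := p.support) fun d hd => ?_]
  · rw [coeff_charHom, Finsupp.mapDomain, Finsupp.sum_apply, Finsupp.sum]
    refine Finset.sum_congr rfl fun d _ => ?_
    rw [Finsupp.single_apply]
    exact if_congr eq_comm rfl rfl
  · rw [Function.mem_support, ite_ne_right_iff] at hd
    exact MvPolynomial.mem_support_iff.mpr hd.2

theorem conv_sum_conv_e_polyToChar {N : ℕ} {κ : Type*} [Fintype κ] (α : Fin N → G) (μ : κ → G)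
    (f : κ → MvPolynomial (Fin N) ℤ) (q : MvPolynomial (Fin N) ℤ) :
    conv (∑ i, conv (e (μ i)) (polyToChar α (f i))) (polyToChar α q)
      = ⇑(∑ i, single (μ i) (1 : ℤ) * charHom α (f i * q)).coeff := by
  simp only [polyToChar_eq_coeff_charHom, e_eq_coeff_single, conv_coeff, ← Finsupp.coe_finsetSum,
    ← AddMonoidAlgebra.coeff_sum, Finset.sum_mul, mul_assoc, map_mul]

end CharacterRing

theorem exists_bijective_of_exists_eq {ι κ α β : Type*} {μ : ι → α} {ν : κ → α}
    (hμ : Injective μ) (hν : Injective ν) {F : ι → β} {F' : κ → β} (hμν : ∀ i, ∃ j, μ i = ν j)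
    (hνμ : ∀ j, ∃ i, ν j = μ i ∧ F' j = F i) :
    ∃ σ : κ → ι, Bijective σ ∧ ∀ j, ν j = μ (σ j) ∧ F' j = F (σ j) := by
  choose σ hσ using hνμ
  refine ⟨σ, ⟨fun j j' hjj' => hν ?_, fun i => ?_⟩, hσ⟩
  · rw [(hσ j).1, (hσ j').1, hjj']
  · obtain ⟨j, hj⟩ := hμν i
    exact ⟨j, hμ ((hσ j).1.symm.trans hj.symm)⟩

section Cosets

open AddMonoidAlgebra

variable {G k : Type*} [AddCommGroup G] [Semiring k] {Q : AddSubgroup G}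

theorem sub_mem_of_coeff_single_mul_ne_zero {F : AddMonoidAlgebra k G}
    (hF : ↑F.coeff.support ⊆ (Q : Set G)) {μ l : G} (h : (single μ 1 * F).coeff l ≠ 0) :
    l - μ ∈ Q := by
  rw [coeff_single_mul_apply, one_mul, neg_add_eq_sub] at h
  exact hF (Finsupp.mem_support_iff.mpr h)

theorem coeff_sum_single_mul_of_sub_mem {κ : Type*} [Fintype κ] {μ : κ → G}
    (hμ : ∀ i j, i ≠ j → μ i - μ j ∉ Q) {F : κ → AddMonoidAlgebra k G}
    (hF : ∀ i, ↑(F i).coeff.support ⊆ (Q : Set G)) {i : κ} {l : G} (hl : l - μ i ∈ Q) :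
    (∑ j, single (μ j) 1 * F j).coeff l = (single (μ i) 1 * F i).coeff l := by
  rw [AddMonoidAlgebra.coeff_sum, Finsupp.finsetSum_apply]
  refine Finset.sum_eq_single i (fun j _ hji => ?_) (by simp)
  by_contra hj
  have hlj := sub_mem_of_coeff_single_mul_ne_zero (hF j) hj
  exact hμ j i hji (by simpa using Q.sub_mem hl hlj)

theorem neg_add_mem_of_single_mul_eq {C : Set G} {F F' : AddMonoidAlgebra k G}
    (hF' : ↑F'.coeff.support ⊆ C) (hF0 : F.coeff 0 ≠ 0) {μ μ' : G}
    (h : single μ 1 * F = single μ' 1 * F') : -μ' + μ ∈ C := by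
  apply hF'
  have hμ := congrArg (fun x => x.coeff μ) h
  simp only [coeff_single_mul_apply, one_mul, neg_add_cancel] at hμ
  simpa [← hμ] using hF0

theorem eq_of_single_mul_eq_single_mul {C : Set G} (hC : ∀ x ∈ C, -x ∈ C → x = 0)
    {F F' : AddMonoidAlgebra k G} (hF : ↑F.coeff.support ⊆ C) (hF' : ↑F'.coeff.support ⊆ C)
    (hF0 : F.coeff 0 ≠ 0) (hF'0 : F'.coeff 0 ≠ 0) {μ μ' : G}
    (h : single μ 1 * F = single μ' 1 * F') : μ = μ' ∧ F = F' := by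
  have hμ := hC _ (neg_add_mem_of_single_mul_eq hF' hF0 h)
    (by simpa using neg_add_mem_of_single_mul_eq hF hF'0 h.symm)
  obtain rfl : μ = μ' := by simpa [neg_add_eq_zero, eq_comm] using hμ
  refine ⟨rfl, ?_⟩
  simpa [← mul_assoc, single_mul_single, ← AddMonoidAlgebra.one_def] using
    congrArg (single (-μ) 1 * ·) h

theorem injective_of_sub_notMem {κ : Type*} {μ : κ → G} (hμ : ∀ i j, i ≠ j → μ i - μ j ∉ Q) :
    Injective μ := by
  intro i j hij
  by_contra hne
  exact hμ i j hne (by rw [hij, sub_self]; exact Q.zero_mem)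

theorem exists_eq_of_sum_single_mul_eq {ι κ : Type*} [Fintype ι] [Fintype κ] {C : Set G}
    (hC : ∀ x ∈ C, -x ∈ C → x = 0) (hCQ : C ⊆ Q) {μ : ι → G} {ν : κ → G}
    (hμ : ∀ i j, i ≠ j → μ i - μ j ∉ Q) (hν : ∀ i j, i ≠ j → ν i - ν j ∉ Q)
    {F : ι → AddMonoidAlgebra k G} {F' : κ → AddMonoidAlgebra k G}
    (hF : ∀ i, ↑(F i).coeff.support ⊆ C) (hF' : ∀ j, ↑(F' j).coeff.support ⊆ C)
    (hF0 : ∀ i, (F i).coeff 0 ≠ 0) (hF'0 : ∀ j, (F' j).coeff 0 ≠ 0)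
    (h : ∑ i, single (μ i) 1 * F i = ∑ j, single (ν j) 1 * F' j) (i : ι) :
    ∃ j, μ i = ν j ∧ F i = F' j := by
  have hFQ i := (hF i).trans hCQ
  have hF'Q j := (hF' j).trans hCQ
  obtain ⟨j, -, hj⟩ : ∃ j ∈ Finset.univ, (single (ν j) 1 * F' j).coeff (μ i) ≠ 0 := by
    refine Finset.exists_ne_zero_of_sum_ne_zero ?_
    rw [← Finsupp.finsetSum_apply, ← AddMonoidAlgebra.coeff_sum, ← h,
      coeff_sum_single_mul_of_sub_mem hμ hFQ (i := i) (by simp), coeff_single_mul_apply]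
    simpa using hF0 i
  have hij : μ i - ν j ∈ Q := sub_mem_of_coeff_single_mul_ne_zero (hF'Q j) hj
  refine ⟨j, eq_of_single_mul_eq_single_mul hC (hF i) (hF' j) (hF0 i) (hF'0 j) ?_⟩
  ext l
  by_cases hl : l - μ i ∈ Q
  · have hl' : l - ν j ∈ Q := by simpa using Q.add_mem hl hij
    rw [← coeff_sum_single_mul_of_sub_mem hμ hFQ hl, h,
      coeff_sum_single_mul_of_sub_mem hν hF'Q hl']
  · have hl' : l - ν j ∉ Q := fun hl' => hl (by simpa using Q.sub_mem hl' hij)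
    rw [not_ne_iff.mp (mt (sub_mem_of_coeff_single_mul_ne_zero (hFQ i)) hl),
      not_ne_iff.mp (mt (sub_mem_of_coeff_single_mul_ne_zero (hF'Q j)) hl')]

theorem exists_bijective_of_sum_single_mul_eq {ι κ : Type*} [Fintype ι] [Fintype κ] {C : Set G}
    (hC : ∀ x ∈ C, -x ∈ C → x = 0) (hCQ : C ⊆ Q) {μ : ι → G} {ν : κ → G}
    (hμ : ∀ i j, i ≠ j → μ i - μ j ∉ Q) (hν : ∀ i j, i ≠ j → ν i - ν j ∉ Q)
    {F : ι → AddMonoidAlgebra k G} {F' : κ → AddMonoidAlgebra k G}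
    (hF : ∀ i, ↑(F i).coeff.support ⊆ C) (hF' : ∀ j, ↑(F' j).coeff.support ⊆ C)
    (hF0 : ∀ i, (F i).coeff 0 ≠ 0) (hF'0 : ∀ j, (F' j).coeff 0 ≠ 0)
    (h : ∑ i, single (μ i) 1 * F i = ∑ j, single (ν j) 1 * F' j) :
    ∃ σ : κ → ι, Bijective σ ∧ ∀ j, ν j = μ (σ j) ∧ F' j = F (σ j) :=
  exists_bijective_of_exists_eq (injective_of_sub_notMem hμ) (injective_of_sub_notMem hν)
    (fun i => (exists_eq_of_sum_single_mul_eq hC hCQ hμ hν hF hF' hF0 hF'0 h i).imp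
      fun _ hj => hj.1)
    (exists_eq_of_sum_single_mul_eq hC hCQ hν hμ hF' hF hF'0 hF0 h.symm)

end Cosets

section Factorization

variable {ι R : Type*} [CommMonoidWithZero R] [IsCancelMulZero R] [DecompositionMonoid R]

theorem dvd_of_mul_pow_mul_eq_mul_pow_mul {b c x y z : R} {k k' : ℕ} (hb : b ≠ 0)
    (hbc : IsRelPrime b c) (hk : k' < k) (h : x * (b ^ k' * c) = y * (b ^ k * z)) : b ∣ x := by
  have hdvd : b ^ k' * b ∣ b ^ k' * (x * c) := by
    rw [mul_left_comm, h, ← pow_succ]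
    exact ((pow_dvd_pow b hk).mul_right z).mul_left y
  exact hbc.dvd_of_dvd_mul_right ((mul_dvd_mul_iff_left (pow_ne_zero k' hb)).mp hdvd)

theorem prod_pow_eq_pow_mul_prod_erase {M : Type*} [CommMonoid M] [DecidableEq ι] (S : Finset ι)
    (b : ι → M) (n : ι → ℕ) (d : ι) :
    ∏ a ∈ S, b a ^ n a = b d ^ (if d ∈ S then n d else 0) * ∏ a ∈ S.erase d, b a ^ n a := by
  split_ifs with hd
  · exact (Finset.mul_prod_erase S _ hd).symm
  · rw [pow_zero, one_mul, Finset.erase_eq_of_notMem hd]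

theorem mem_and_le_of_mul_prod_pow_eq {κ : Type*} [DecidableEq ι] {b : ι → R} {S S' : Finset ι}
    {n n' : ι → ℕ} {F G : κ → R} (hcop : ∀ d ∈ S, ∀ d' ∈ S', d ≠ d' → IsRelPrime (b d) (b d'))
    (hb : ∀ d ∈ S, b d ≠ 0) (hn : ∀ d ∈ S, 0 < n d) (hF : ∀ d ∈ S, ∃ k, ¬ b d ∣ F k)
    (h : ∀ k, F k * ∏ d ∈ S', b d ^ n' d = G k * ∏ d ∈ S, b d ^ n d) :
    ∀ d ∈ S, d ∈ S' ∧ n d ≤ n' d := by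
  intro d hd
  by_contra hnot
  have hlt : (if d ∈ S' then n' d else 0) < n d := by
    split_ifs with hd'
    · exact not_le.mp fun hle => hnot ⟨hd', hle⟩
    · exact hn d hd
  obtain ⟨k, hk⟩ := hF d hd
  have hsplit : F k * (b d ^ (if d ∈ S' then n' d else 0) * ∏ a ∈ S'.erase d, b a ^ n' a)
      = G k * (b d ^ n d * ∏ a ∈ S.erase d, b a ^ n a) := by
    rw [← prod_pow_eq_pow_mul_prod_erase, h k, prod_pow_eq_pow_mul_prod_erase S b n d, if_pos hd]
  have hcop' : IsRelPrime (b d) (∏ a ∈ S'.erase d, b a ^ n' a) :=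
    IsRelPrime.prod_right fun a ha =>
      (hcop d hd a (Finset.mem_of_mem_erase ha) (Finset.ne_of_mem_erase ha).symm).pow_right
  exact hk (dvd_of_mul_pow_mul_eq_mul_pow_mul (hb d hd) hcop' hlt hsplit)

theorem eq_of_mul_prod_pow_eq {κ : Type*} [DecidableEq ι] {b : ι → R} {S S' : Finset ι}
    {n n' : ι → ℕ} {F G : κ → R}
    (hcop : ∀ d ∈ S ∪ S', ∀ d' ∈ S ∪ S', d ≠ d' → IsRelPrime (b d) (b d'))
    (hb : ∀ d ∈ S ∪ S', b d ≠ 0) (hn : ∀ d ∈ S, 0 < n d) (hn' : ∀ d ∈ S', 0 < n' d)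
    (hF : ∀ d ∈ S, ∃ k, ¬ b d ∣ F k) (hG : ∀ d ∈ S', ∃ k, ¬ b d ∣ G k)
    (h : ∀ k, F k * ∏ d ∈ S', b d ^ n' d = G k * ∏ d ∈ S, b d ^ n d) :
    S = S' ∧ ∀ d ∈ S, n d = n' d := by
  have hS := mem_and_le_of_mul_prod_pow_eq
    (fun d hd d' hd' => hcop d (Finset.mem_union_left _ hd) d' (Finset.mem_union_right _ hd'))
    (fun d hd => hb d (Finset.mem_union_left _ hd)) hn hF h
  have hS' := mem_and_le_of_mul_prod_pow_eq
    (fun d hd d' hd' => hcop d (Finset.mem_union_right _ hd) d' (Finset.mem_union_left _ hd'))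
    (fun d hd => hb d (Finset.mem_union_right _ hd)) hn' hG fun k => (h k).symm
  exact ⟨Finset.Subset.antisymm (fun d hd => (hS d hd).1) (fun d hd => (hS' d hd).1),
    fun d hd => le_antisymm (hS d hd).2 (hS' d (hS d hd).1).2⟩

end Factorization

theorem Qlat_eq_span {G : Type*} [AddCommGroup G] {N : ℕ} (α : Fin N → G) :
    Qlat α = (Submodule.span ℤ (Set.range α)).toAddSubgroup := by
  ext v
  simp only [Qlat, Set.mem_ofPred_eq, Submodule.coe_toAddSubgroup, SetLike.mem_coe,
    Submodule.mem_span_range_iff_exists_fun, eq_comm]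

section Binomials

variable {N : ℕ}

theorem constantCoeff_bd {d : Fin N → ℕ} (hd : d ≠ 0) : constantCoeff (bd d) = 1 := by
  obtain ⟨i, hi⟩ := Function.ne_iff.mp hd
  simp only [bd, map_sub, map_one, map_prod, map_pow, constantCoeff_X]
  rw [Finset.prod_eq_zero (Finset.mem_univ i) (zero_pow hi), sub_zero]

theorem bd_ne_zero {d : Fin N → ℕ} (hd : d ≠ 0) : bd d ≠ 0 := fun h0 => by
  simpa [h0] using constantCoeff_bd hd

theorem constantCoeff_prod_bd_pow {T : Finset (Fin N → ℕ)} (hT : ∀ d ∈ T, d ≠ 0)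
    (n : (Fin N → ℕ) → ℕ) : constantCoeff (∏ d ∈ T, bd d ^ n d) = 1 := by
  rw [map_prod]
  exact Finset.prod_eq_one fun d hd => by rw [map_pow, constantCoeff_bd (hT d hd), one_pow]

end Binomials

theorem uniqueness_of_reduced_rational_form_general
    {N : ℕ} (α : Fin N → V) (hα : LinearIndependent ℝ α)
    (T T' : Finset (Fin N → ℕ))
    (hT0 : ∀ d ∈ T ∪ T', d ≠ 0)
    (hcop : ∀ d ∈ T ∪ T', ∀ d' ∈ T ∪ T', d ≠ d' →
      ∀ p : MvPolynomial (Fin N) ℤ, p ∣ bd d → p ∣ bd d' → IsUnit p)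
    {m m' : ℕ} (μ : Fin m → V) (ν : Fin m' → V)
    (hμ : ∀ i j, i ≠ j → μ i - μ j ∉ Qlat α)
    (hν : ∀ i j, i ≠ j → ν i - ν j ∉ Qlat α)
    (f : Fin m → MvPolynomial (Fin N) ℤ) (g : Fin m' → MvPolynomial (Fin N) ℤ)
    (hf : ∀ i, coeff 0 (f i) ≠ 0) (hg : ∀ j, coeff 0 (g j) ≠ 0)
    (n n' : (Fin N → ℕ) → ℕ)
    (hn : ∀ d ∈ T, 0 < n d) (hn' : ∀ d ∈ T', 0 < n' d)
    (hfred : ∀ d ∈ T, ∃ i, ¬ bd d ∣ f i)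
    (hgred : ∀ d ∈ T', ∃ j, ¬ bd d ∣ g j)
    (heq : conv (∑ i, conv (e (μ i)) (polyToChar α (f i)))
             (polyToChar α (∏ d ∈ T', bd d ^ n' d))
         = conv (∑ j, conv (e (ν j)) (polyToChar α (g j)))
             (polyToChar α (∏ d ∈ T, bd d ^ n d))) :
    T = T' ∧ (∀ d ∈ T, n d = n' d) ∧ m = m' ∧
      ∃ σ : Fin m' → Fin m, Function.Bijective σ ∧
        ∀ j, ν j = μ (σ j) ∧ g j = f (σ j) := by
  classical
  have hweight : Injective (weight α) := weight_injective (hα.restrict_scalars' ℕ)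
  have hB := constantCoeff_prod_bd_pow (fun d hd => hT0 d (Finset.mem_union_left T' hd)) n
  have hB' := constantCoeff_prod_bd_pow (fun d hd => hT0 d (Finset.mem_union_right T hd)) n'
  have hsum : ∑ i, AddMonoidAlgebra.single (μ i) 1 * charHom α (f i * ∏ d ∈ T', bd d ^ n' d)
      = ∑ j, AddMonoidAlgebra.single (ν j) 1 * charHom α (g j * ∏ d ∈ T, bd d ^ n d) := by
    simpa only [conv_sum_conv_e_polyToChar, DFunLike.coe_fn_eq, AddMonoidAlgebra.coeff_inj]
      using heq
  rw [Qlat_eq_span] at hμ hν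
  obtain ⟨σ, hσ, hσeq⟩ := exists_bijective_of_sum_single_mul_eq
    (fun x => eq_zero_of_mem_range_weight_of_neg_mem hweight) (range_weight_subset_span α) hμ hν
    (fun i => support_coeff_charHom_subset α _) (fun j => support_coeff_charHom_subset α _)
    (fun i => by rw [coeff_charHom_mul_zero hweight _ hB']; exact hf i)
    (fun j => by rw [coeff_charHom_mul_zero hweight _ hB]; exact hg j) hsum
  have hfg j : f (σ j) * _ = g j * _ := (charHom_injective hweight (hσeq j).2).symm
  have hfred' : ∀ d ∈ T, ∃ j, ¬ bd d ∣ f (σ j) := fun d hd => by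
    obtain ⟨i, hi⟩ := hfred d hd
    obtain ⟨j, rfl⟩ := hσ.2 i
    exact ⟨j, hi⟩
  obtain ⟨rfl, hnn⟩ := eq_of_mul_prod_pow_eq (b := bd) hcop (fun d hd => bd_ne_zero (hT0 d hd))
    hn hn' hfred' hgred hfg
  rw [Finset.prod_congr rfl fun d hd => congrArg _ (hnn d hd).symm] at hfg
  have hB0 : ∏ d ∈ T, bd d ^ n d ≠ 0 := fun h0 => by simp [h0] at hB
  refine ⟨rfl, hnn, by simpa using (Fintype.card_of_bijective hσ).symm, σ, hσ,
    fun j => ⟨(hσeq j).1, (mul_right_cancel₀ hB0 (hfg j)).symm⟩⟩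

/-- Lemmas 3.7/3.8: uniqueness of reduced rational forms of formal
characters in the character ring `𝒳`. -/
theorem uniqueness_of_reduced_rational_form
    {N : ℕ} (α : Fin N → V) (hα : LinearIndependent ℝ α)
    (T T' : Finset (Fin N → ℕ))
    (hT0 : ∀ d ∈ T ∪ T', d ≠ 0)
    (hcop : ∀ d ∈ T ∪ T', ∀ d' ∈ T ∪ T', d ≠ d' →
      ∀ p : MvPolynomial (Fin N) ℤ, p ∣ bd d → p ∣ bd d' → IsUnit p)
    (hsqf : ∀ d ∈ T ∪ T', Squarefree (bd d))
    {m m' : ℕ} (μ : Fin m → V) (ν : Fin m' → V)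
    (hμ : ∀ i j, i ≠ j → μ i - μ j ∉ Qlat α)
    (hν : ∀ i j, i ≠ j → ν i - ν j ∉ Qlat α)
    (f : Fin m → MvPolynomial (Fin N) ℤ) (g : Fin m' → MvPolynomial (Fin N) ℤ)
    (hf : ∀ i, coeff 0 (f i) ≠ 0) (hg : ∀ j, coeff 0 (g j) ≠ 0)
    (n n' : (Fin N → ℕ) → ℕ)
    (hn : ∀ d ∈ T, 0 < n d) (hn' : ∀ d ∈ T', 0 < n' d)
    (hfred : ∀ d ∈ T, ∃ i, ¬ bd d ∣ f i)
    (hgred : ∀ d ∈ T', ∃ j, ¬ bd d ∣ g j)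
    (heq : conv (∑ i, conv (e (μ i)) (polyToChar α (f i)))
             (polyToChar α (∏ d ∈ T', bd d ^ n' d))
         = conv (∑ j, conv (e (ν j)) (polyToChar α (g j)))
             (polyToChar α (∏ d ∈ T, bd d ^ n d))) :
    T = T' ∧ (∀ d ∈ T, n d = n' d) ∧ m = m' ∧
      ∃ σ : Fin m' → Fin m, Function.Bijective σ ∧
        ∀ j, ν j = μ (σ j) ∧ g j = f (σ j) :=
  uniqueness_of_reduced_rational_form_general α hα T T' hT0 hcop μ ν hμ hν f g hf hg n n' hn hn'
    hfred hgred heq
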